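/- arXiv:1105.0036 — 4 statements merged into one kernel-verified Lean document; each statement's English description precedes it below -/
import Mathlib

section
/- Let S = UV where U ∈ ℝ^{f×r}_{≥0}, V ∈ ℝ^{r×v}_{≥0}, every entry of S is at most (n+1)·Δ where Δ = (√(n+1))^{n+1} and n ≥ 1, and the matrices are normalized, meaning that for every ℓ the maximum absolute entry of the ℓ-th column of U equals the maximum absolute entry of the ℓ-th row of V. Then every entry of U is at most Δ and every entry of V is at most Δ. -/
/-- For a normalized nonnegative factorization S = UV of a matrix with entries at most
(n+1)Δ, all entries of U and V are at most Δ. -/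
theorem stmt1 {f r v n : ℕ} (hf : 0 < f) (hr : 0 < r) (hv : 0 < v) (hn : 1 ≤ n)
    (U : Matrix (Fin f) (Fin r) ℝ) (V : Matrix (Fin r) (Fin v) ℝ)
    (S : Matrix (Fin f) (Fin v) ℝ)
    (hU : ∀ i l, 0 ≤ U i l) (hV : ∀ l j, 0 ≤ V l j) (hS : S = U * V)
    (Δ : ℝ) (hΔ : Δ = Real.sqrt (n + 1) ^ (n + 1))
    (hSbound : ∀ i j, S i j ≤ (n + 1) * Δ)
    (hnorm : ∀ l : Fin r, (⨆ i, |U i l|) = ⨆ j, |V l j|) :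
    (∀ i l, U i l ≤ Δ) ∧ (∀ l j, V l j ≤ Δ) := by
  have hf' : Nonempty (Fin f) := ⟨⟨0, hf⟩⟩
  have hv' : Nonempty (Fin v) := ⟨⟨0, hv⟩⟩
  have hsq : Real.sqrt (n + 1) ^ 2 = (n + 1 : ℝ) := Real.sq_sqrt (by positivity)
  have h1 : (1 : ℝ) ≤ Real.sqrt (n + 1) := by
    rw [show (1:ℝ) = Real.sqrt 1 from (Real.sqrt_one).symm]
    exact Real.sqrt_le_sqrt (by norm_num)
  have hΔn : (n + 1 : ℝ) ≤ Δ := by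
    rw [hΔ]
    calc (n + 1 : ℝ) = Real.sqrt (n + 1) ^ 2 := hsq.symm
      _ ≤ Real.sqrt (n + 1) ^ (n + 1) := pow_le_pow_right₀ h1 (by omega : 2 ≤ n + 1)
  have hΔpos : (0 : ℝ) < Δ := lt_of_lt_of_le (by positivity) hΔn
  -- key: no i, l, j with both U i l > Δ and V l j > Δ
  have key : ∀ (i : Fin f) (l : Fin r) (j : Fin v), Δ < U i l → Δ < V l j → False := by
    intro i l j hUi hVj
    have hterm : Δ * Δ < U i l * V l j :=
      mul_lt_mul' hUi.le hVj hΔpos.le (hΔpos.trans hUi)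
    have hSij : U i l * V l j ≤ S i j := by
      rw [hS]
      simp only [Matrix.mul_apply]
      exact Finset.single_le_sum (f := fun k => U i k * V k j)
        (fun k _ => mul_nonneg (hU i k) (hV k j)) (Finset.mem_univ l)
    have : S i j ≤ (n + 1) * Δ := hSbound i j
    nlinarith [mul_le_mul_of_nonneg_right hΔn hΔpos.le]
  have bddU : ∀ l, BddAbove (Set.range fun i => |U i l|) :=
    fun l => (Set.finite_range _).bddAbove
  have bddV : ∀ l, BddAbove (Set.range fun j => |V l j|) :=
    fun l => (Set.finite_range _).bddAbove
  constructor
  · intro i l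
    by_contra hlt
    push_neg at hlt
    obtain ⟨j, hj⟩ := Finite.exists_max (fun j => |V l j|)
    have hjmax : |V l j| = ⨆ j', |V l j'| :=
      le_antisymm (le_ciSup (bddV l) j) (ciSup_le hj)
    have : Δ < V l j := by
      calc Δ < U i l := hlt
        _ ≤ |U i l| := le_abs_self _
        _ ≤ ⨆ i', |U i' l| := le_ciSup (bddU l) i
        _ = |V l j| := by rw [hnorm l, hjmax]
        _ = V l j := abs_of_nonneg (hV l j)
    exact key i l j hlt this
  · intro l j
    by_contra hlt
    push_neg at hlt
    obtain ⟨i, hi⟩ := Finite.exists_max (fun i => |U i l|)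
    have himax : |U i l| = ⨆ i', |U i' l| :=
      le_antisymm (le_ciSup (bddU l) i) (ciSup_le hi)
    have : Δ < U i l := by
      calc Δ < V l j := hlt
        _ ≤ |V l j| := le_abs_self _
        _ ≤ ⨆ j', |V l j'| := le_ciSup (bddV l) j
        _ = |U i l| := by rw [← hnorm l, himax]
        _ = U i l := abs_of_nonneg (hU i l)
    exact key i l j this hlt
end

section
/- Let w₁,…,w_k be linearly independent vectors in ℝ^n chosen from a finite set W of vectors so that the parallelepiped volume vol(w₁,…,w_k) is maximal among all k-element linearly independent subsets of W, where k = dim(span W). Then every w ∈ W can be written as w = Σᵢ λᵢwᵢ with |λᵢ| ≤ 1 for all i. -/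
/-!
Since `k = dim span W`, the `wᵢ` form a basis of `span W`, so `v = ∑ cᵢ wᵢ`. Replacing `w_j` by
`v` turns the Gram matrix `G` into `AᵀGA`, where `A` is the identity with `j`-th column `c`, so
the volume gets multiplied by `|det A| = |c_j|`. If `c_j ≠ 0` the new family is still independent
(its volume is positive), and maximality of `w` forces `|c_j| ≤ 1`.
-/

/-- The k-dimensional volume of the parallelepiped spanned by the vectors `v`,
defined as the square root of the Gram determinant. -/
noncomputable def vol {n k : ℕ} (v : Fin k → EuclideanSpace ℝ (Fin n)) : ℝ :=
  Real.sqrt (Matrix.det (Matrix.of fun i j => (inner ℝ (v i) (v j) : ℝ)))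

open Matrix

theorem vol_eq_sqrt_det_gram {n k : ℕ} (v : Fin k → EuclideanSpace ℝ (Fin n)) :
    vol v = √(gram ℝ v).det := rfl

theorem vol_pos_iff_linearIndependent {n k : ℕ} {v : Fin k → EuclideanSpace ℝ (Fin n)} :
    0 < vol v ↔ LinearIndependent ℝ v := by
  rw [vol_eq_sqrt_det_gram, Real.sqrt_pos, ← det_gram_ne_zero_iff_linearIndependent,
    (posSemidef_gram ℝ v).det_nonneg.lt_iff_ne']

theorem gram_sum_smul {E ι : Type*} [NormedAddCommGroup E] [InnerProductSpace ℝ E] [Fintype ι]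
    (w : ι → E) (A : Matrix ι ι ℝ) :
    gram ℝ (fun i => ∑ p, A p i • w p) = Aᵀ * gram ℝ w * A := by
  ext i j
  simp only [gram_apply, mul_apply, transpose_apply, sum_inner, inner_sum,
    real_inner_smul_left, real_inner_smul_right, Finset.sum_mul]
  exact Finset.sum_congr rfl fun _ _ => Finset.sum_congr rfl fun _ _ => by ring

theorem vol_sum_smul {n k : ℕ} (w : Fin k → EuclideanSpace ℝ (Fin n))
    (A : Matrix (Fin k) (Fin k) ℝ) :
    vol (fun i => ∑ p, A p i • w p) = |A.det| * vol w := by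
  rw [vol_eq_sqrt_det_gram, vol_eq_sqrt_det_gram, gram_sum_smul, det_mul, det_mul,
    det_transpose, mul_comm _ A.det, ← mul_assoc, ← sq, Real.sqrt_mul (sq_nonneg _),
    Real.sqrt_sq_eq_abs]

theorem det_one_updateCol {R ι : Type*} [CommRing R] [Fintype ι] [DecidableEq ι] (j : ι)
    (c : ι → R) : ((1 : Matrix ι ι R).updateCol j c).det = c j := by
  simpa [one_apply] using det_updateCol_sum (1 : Matrix ι ι R) j c

theorem update_sum_smul_eq_sum_updateCol_smul {R E ι : Type*} [Semiring R] [AddCommMonoid E]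
    [Module R E] [Fintype ι] [DecidableEq ι] (w : ι → E) (j : ι) (c : ι → R) :
    Function.update w j (∑ i, c i • w i) =
      fun i => ∑ p, (1 : Matrix ι ι R).updateCol j c p i • w p := by
  ext1 i
  rcases eq_or_ne i j with rfl | hij
  · simp
  · simp [one_apply, hij]

theorem vol_update_sum_smul {n k : ℕ} (w : Fin k → EuclideanSpace ℝ (Fin n)) (j : Fin k)
    (c : Fin k → ℝ) :
    vol (Function.update w j (∑ i, c i • w i)) = |c j| * vol w := by
  rw [update_sum_smul_eq_sum_updateCol_smul, vol_sum_smul, det_one_updateCol]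

theorem exists_sum_smul_eq_of_finrank_span_eq {K E ι : Type*} [DivisionRing K] [AddCommGroup E]
    [Module K E] [Fintype ι] {w : ι → E} (hli : LinearIndependent K w) {s : Set E}
    (hs : s.Finite) (hws : ∀ i, w i ∈ s)
    (hcard : Fintype.card ι = Module.finrank K (Submodule.span K s))
    {v : E} (hv : v ∈ s) : ∃ c : ι → K, ∑ i, c i • w i = v := by
  have : FiniteDimensional K (Submodule.span K s) := FiniteDimensional.span_of_finite K hs
  have hspan : Submodule.span K (Set.range w) = Submodule.span K s :=
    Submodule.eq_of_le_of_finrank_eq (Submodule.span_le.mpr (Set.range_subset_iff.mpr fun i =>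
      Submodule.subset_span (hws i))) (by rw [finrank_span_eq_card hli, hcard])
  rw [← Submodule.mem_span_range_iff_exists_fun, hspan]
  exact Submodule.subset_span hv

/-- If w₁,…,w_k are linearly independent vectors from a finite set W, with
k = dim span W, maximizing the parallelepiped volume among all linearly independent
k-tuples from W, then every w ∈ W is a combination of the wᵢ with coefficients
of absolute value at most 1. -/
theorem stmt3 {n k : ℕ} (W : Finset (EuclideanSpace ℝ (Fin n)))
    (hk : k = Module.finrank ℝ (Submodule.span ℝ (W : Set (EuclideanSpace ℝ (Fin n)))))
    (w : Fin k → EuclideanSpace ℝ (Fin n))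
    (hwW : ∀ i, w i ∈ W) (hli : LinearIndependent ℝ w)
    (hmax : ∀ u : Fin k → EuclideanSpace ℝ (Fin n),
      (∀ i, u i ∈ W) → LinearIndependent ℝ u → vol u ≤ vol w) :
    ∀ v ∈ W, ∃ lam : Fin k → ℝ, v = ∑ i, lam i • w i ∧ ∀ i, |lam i| ≤ 1 := by
  intro v hv
  obtain ⟨c, rfl⟩ := exists_sum_smul_eq_of_finrank_span_eq hli W.finite_toSet hwW
    (by rw [Fintype.card_fin, hk]) hv
  refine ⟨c, rfl, fun j => ?_⟩
  rcases eq_or_ne (c j) 0 with hcj | hcj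
  · simp [hcj]
  have hw_pos : 0 < vol w := vol_pos_iff_linearIndependent.mpr hli
  have hvol := vol_update_sum_smul w j c
  have hu_li : LinearIndependent ℝ (Function.update w j (∑ i, c i • w i)) :=
    vol_pos_iff_linearIndependent.mp (by rw [hvol]; positivity)
  have hu_mem : ∀ i, Function.update w j (∑ i, c i • w i) i ∈ W :=
    (Function.forall_update_iff w fun _ u => u ∈ W).mpr ⟨hv, fun i _ => hwW i⟩
  have := hmax _ hu_mem hu_li
  rwa [hvol, mul_le_iff_le_one_left hw_pos] at this
end

section
/- Suppose that for every nonempty X ⊆ {0,1}^n there is an injective assignment of X to a triple of matrices (Ā, Ū, b̄) where Ā ∈ ℤ^{(n+R)×n} and b̄ ∈ ℤ^{n+R} have entries of absolute value at most Δ, and Ū is an (n+R)×R matrix each of whose entries ranges over a set of at most 16Δ⁵ values (with Δ = (n+1)^{(n+1)/2} and R ≤ 2^n ≤ Δ, n ≤ Δ). Then 2^{2^n} - 1 ≤ (16Δ⁵)^{(n+R+1)(n+R)}, and consequently R ≥ C·2^{n/2}/√(n·log(2n)) for some absolute constant C > 0 and all sufficiently large n. -/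
private theorem stmt13_natlem (n : ℕ) (hn : 30 ≤ n) : 576 * (n+1)^4 ≤ 2^n := by
  induction n, hn using Nat.le_induction with
  | base => norm_num
  | succ n hn ih =>
    have hn4 : 30 * n^3 ≤ n^4 := by
      calc 30 * n^3 ≤ n * n^3 := Nat.mul_le_mul_right _ hn
      _ = n^4 := by ring
    have hn3 : 30 * n^2 ≤ n^3 := by
      calc 30 * n^2 ≤ n * n^2 := Nat.mul_le_mul_right _ hn
      _ = n^3 := by ring
    have hn2 : 30 * n ≤ n^2 := by
      calc 30 * n ≤ n * n := Nat.mul_le_mul_right _ hn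
      _ = n^2 := by ring
    have h1 : 576 * (n+2)^4 ≤ 2 * (576 * (n+1)^4) := by nlinarith [hn, hn4, hn3, hn2]
    calc 576 * (n+1+1)^4 = 576 * (n+2)^4 := by ring_nf
    _ ≤ 2 * (576*(n+1)^4) := h1
    _ ≤ 2 * 2^n := by omega
    _ = 2^(n+1) := by ring

set_option maxHeartbeats 1600000 in
/-- Counting argument: if every nonempty X ⊆ {0,1}^n injects into triples (Ā, Ū, b̄) with
Ā ∈ ℤ^{(n+R)×n}, b̄ ∈ ℤ^{n+R} of entries bounded by Δ = (√(n+1))^{n+1}, and Ū an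
(n+R)×R matrix with entries ranging over at most 16Δ⁵ values (where R ≤ 2^n ≤ Δ, n ≤ Δ),
then 2^{2^n} - 1 ≤ (16Δ⁵)^{(n+R+1)(n+R)}, and consequently
R ≥ C·2^{n/2}/√(n log(2n)) for an absolute constant C > 0 and all large n. -/
theorem stmt13 (R : ℕ → ℕ) (Δ : ℕ → ℝ)
    (hΔ : ∀ n : ℕ, Δ n = Real.sqrt ((n : ℝ) + 1) ^ (n + 1))
    (hR : ∀ n : ℕ, R n ≤ 2 ^ n) (h2Δ : ∀ n : ℕ, (2 : ℝ) ^ n ≤ Δ n) (hnΔ : ∀ n : ℕ, (n : ℝ) ≤ Δ n)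
    (h : ∀ n : ℕ, 1 ≤ n → ∃ (S : Finset ℝ)
      (Φ : {X : Finset (Fin n → Bool) // X.Nonempty} →
        Matrix (Fin (n + R n)) (Fin n) ℤ × Matrix (Fin (n + R n)) (Fin (R n)) ℝ ×
          (Fin (n + R n) → ℤ)),
        ((S.card : ℝ) ≤ 16 * Δ n ^ 5) ∧ Function.Injective Φ ∧
        ∀ X, (∀ i j, |((Φ X).1 i j : ℝ)| ≤ Δ n) ∧ (∀ i j, (Φ X).2.1 i j ∈ S) ∧
          (∀ i, |(((Φ X).2.2 i : ℤ) : ℝ)| ≤ Δ n)) :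
    (∀ n : ℕ, 1 ≤ n →
      (2 : ℝ) ^ (2 ^ n) - 1 ≤ (16 * Δ n ^ 5) ^ ((n + R n + 1) * (n + R n))) ∧
    ∃ C : ℝ, 0 < C ∧ ∃ N : ℕ, ∀ n : ℕ, N ≤ n →
      C * 2 ^ ((n : ℝ) / 2) / Real.sqrt ((n : ℝ) * Real.log (2 * (n : ℝ))) ≤ (R n : ℝ) := by
  have key1 : ∀ n : ℕ, 1 ≤ n →
      (2 : ℝ) ^ (2 ^ n) - 1 ≤ (16 * Δ n ^ 5) ^ ((n + R n + 1) * (n + R n)) := by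
    intro n hn
    obtain ⟨S, Φ, hS, hinj, hb⟩ := h n hn
    have h2Del : (2:ℝ)^n ≤ Δ n := h2Δ n
    have hDel2 : (2:ℝ) ≤ (Δ n) := le_trans (by
      calc (2:ℝ) = 2^1 := (pow_one 2).symm
      _ ≤ 2^n := by exact pow_le_pow_right₀ one_le_two hn) h2Del
    set m : ℤ := ⌊(Δ n)⌋ with hm
    set I : Finset ℤ := Finset.Icc (-m) m with hI
    have hmem : ∀ (a : ℤ), |(a:ℝ)| ≤ (Δ n) → a ∈ I := by
      intro a ha
      rw [abs_le] at ha
      simp only [hI, Finset.mem_Icc]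
      constructor
      · rw [neg_le, hm, Int.le_floor]; push_cast; linarith [ha.1]
      · rw [hm, Int.le_floor]; exact ha.2
    -- the injection
    set F : {X : Finset (Fin n → Bool) // X.Nonempty} →
        (Fin (n+(R n)) → Fin n → I) × (Fin (n+(R n)) → Fin (R n) → S) × (Fin (n+(R n)) → I) :=
      fun X => (fun i j => ⟨(Φ X).1 i j, hmem _ ((hb X).1 i j)⟩,
                fun i j => ⟨(Φ X).2.1 i j, (hb X).2.1 i j⟩,
                fun i => ⟨(Φ X).2.2 i, hmem _ ((hb X).2.2 i)⟩) with hF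
    have hFinj : Function.Injective F := by
      intro X Y hXY
      simp only [hF, Prod.mk.injEq] at hXY
      obtain ⟨e1, e2, e3⟩ := hXY
      apply hinj
      refine Prod.ext ?_ (Prod.ext ?_ ?_)
      · ext i j
        exact congrArg Subtype.val (congrFun (congrFun e1 i) j)
      · ext i j
        exact congrArg Subtype.val (congrFun (congrFun e2 i) j)
      · funext i
        exact congrArg Subtype.val (congrFun e3 i)
    have hcard := Fintype.card_le_of_injective F hFinj
    have hdom : Fintype.card {X : Finset (Fin n → Bool) // X.Nonempty} = 2^(2^n) - 1 := by
      have e : Fintype.card {X : Finset (Fin n → Bool) // X.Nonempty}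
          = Fintype.card {X : Finset (Fin n → Bool) // ¬ X = ∅} :=
        Fintype.card_congr (Equiv.subtypeEquivRight fun X => by
          simp [Finset.nonempty_iff_ne_empty])
      rw [e, Fintype.card_subtype_compl, Fintype.card_subtype_eq, Fintype.card_finset]
      congr 1
      simp
    have hcod : Fintype.card ((Fin (n+(R n)) → Fin n → I) × (Fin (n+(R n)) → Fin (R n) → S) × (Fin (n+(R n)) → I))
        = I.card ^ (n * (n+(R n))) * (S.card ^ ((R n) * (n+(R n))) * I.card ^ (n+(R n))) := by
      simp [Fintype.card_fun, pow_mul]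
    rw [hdom, hcod] at hcard
    -- now real estimates
    have hDel0 : (0:ℝ) < (Δ n) := lt_of_lt_of_le two_pos hDel2
    have hDelDel5 : (Δ n) ≤ (Δ n) ^ 5 := le_self_pow₀ (by linarith) (by norm_num)
    have hDelpow : (1:ℝ) ≤ 16 * (Δ n) ^ 5 := by linarith
    have hIcard : (I.card : ℝ) ≤ 16 * (Δ n) ^ 5 := by
      have hm0 : (0:ℤ) ≤ m := Int.floor_nonneg.mpr hDel0.le
      have hcardI : (I.card : ℤ) = 2*m+1 := by
        rw [hI, Int.card_Icc, Int.toNat_of_nonneg (by omega)]; ring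
      have hcr : (I.card : ℝ) = 2*(m:ℝ)+1 := by exact_mod_cast hcardI
      rw [hcr]
      have hmr : (m:ℝ) ≤ (Δ n) := Int.floor_le (Δ n)
      linarith
    have key : ((2^(2^n) - 1 : ℕ) : ℝ) ≤ (16 * (Δ n) ^ 5) ^ ((n + (R n) + 1) * (n + (R n))) := by
      have c1 : ((2^(2^n) - 1 : ℕ) : ℝ)
          ≤ ((I.card ^ (n * (n+(R n))) * (S.card ^ ((R n) * (n+(R n))) * I.card ^ (n+(R n))) : ℕ) : ℝ) :=
        Nat.cast_le.mpr hcard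
      have c2 : ((I.card ^ (n * (n+(R n))) * (S.card ^ ((R n) * (n+(R n))) * I.card ^ (n+(R n))) : ℕ) : ℝ)
          = (I.card:ℝ) ^ (n * (n+(R n))) * ((S.card:ℝ) ^ ((R n) * (n+(R n))) * (I.card:ℝ) ^ (n+(R n))) := by
        push_cast; ring
      have c3 : (I.card:ℝ) ^ (n * (n+(R n))) * ((S.card:ℝ) ^ ((R n) * (n+(R n))) * (I.card:ℝ) ^ (n+(R n)))
          ≤ (16 * (Δ n)^5) ^ (n * (n+(R n))) * ((16 * (Δ n)^5) ^ ((R n) * (n+(R n))) * (16 * (Δ n)^5) ^ (n+(R n))) := by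
        have hS0 : (0:ℝ) ≤ (S.card:ℝ) := Nat.cast_nonneg _
        have hI0 : (0:ℝ) ≤ (I.card:ℝ) := Nat.cast_nonneg _
        have hb0 : (0:ℝ) ≤ 16 * (Δ n)^5 := by positivity
        exact mul_le_mul (pow_le_pow_left₀ hI0 hIcard _)
          (mul_le_mul (pow_le_pow_left₀ hS0 hS _) (pow_le_pow_left₀ hI0 hIcard _)
            (pow_nonneg hI0 _) (pow_nonneg hb0 _))
          (mul_nonneg (pow_nonneg hS0 _) (pow_nonneg hI0 _)) (pow_nonneg hb0 _)
      have c4 : (16 * (Δ n)^5 : ℝ) ^ (n * (n+(R n))) * ((16 * (Δ n)^5) ^ ((R n) * (n+(R n))) * (16 * (Δ n)^5) ^ (n+(R n)))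
          = (16 * (Δ n) ^ 5) ^ ((n + (R n) + 1) * (n + (R n))) := by
        rw [← pow_add, ← pow_add]
        congr 1
        ring
      rw [c2] at c1
      rw [← c4]
      exact le_trans c1 c3
    have h1 : (1:ℕ) ≤ 2^(2^n) := Nat.one_le_two_pow
    calc (2 : ℝ) ^ (2 ^ n) - 1 = ((2^(2^n) - 1 : ℕ) : ℝ) := by
          push_cast [h1]; ring
      _ ≤ _ := key
  refine ⟨key1, ?_⟩
  refine ⟨1/8, by norm_num, 30, fun n hn => ?_⟩
  have hn1 : 1 ≤ n := le_trans (by norm_num) hn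
  have hn30 : (30:ℝ) ≤ (n:ℝ) := by exact_mod_cast hn
  have hnR : (1:ℝ) ≤ (n:ℝ) := by linarith
  set r : ℝ := (R n : ℝ) with hr
  have hr0 : 0 ≤ r := Nat.cast_nonneg _
  set D : ℝ := Δ n with hD
  set G : ℝ := (n:ℝ) * Real.log (2 * (n:ℝ)) with hG
  set s : ℝ := Real.sqrt G with hs
  set T : ℝ := (2:ℝ) ^ ((n:ℝ)/2) with hT
  have hD0 : 0 < D := lt_of_lt_of_le (by positivity) (h2Δ n)
  -- log(2n) ≥ 1
  have h2n : Real.exp 1 ≤ 2 * (n:ℝ) := by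
    have := Real.exp_one_lt_d9
    linarith
  have hlog2n : 1  ≤ Real.log (2 * (n:ℝ)) := by
    rw [Real.le_log_iff_exp_le (by linarith)]
    exact h2n
  have hG0 : (0:ℝ) < G := by
    rw [hG]; positivity
  have hGn : (30:ℝ) ≤ G := by
    calc (30:ℝ) = 30 * 1 := by ring
    _ ≤ (n:ℝ) * Real.log (2*(n:ℝ)) := by
        apply mul_le_mul hn30 hlog2n zero_le_one (by linarith)
    _ = G := rfl
  have hs0 : 0 < s := Real.sqrt_pos.mpr hG0
  have hs2 : s^2 = G := Real.sq_sqrt hG0.le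
  -- T^2 = 2^n
  have hT2 : T^2 = (2:ℝ)^n := by
    rw [hT, ← Real.rpow_natCast ((2:ℝ) ^ ((n:ℝ)/2)) 2, ← Real.rpow_mul (by norm_num)]
    have he : (n:ℝ)/2 * ((2:ℕ):ℝ) = ((n:ℕ):ℝ) := by push_cast; ring
    rw [he, Real.rpow_natCast]
  have hT0 : 0 < T := Real.rpow_pos_of_pos two_pos _
  -- log D
  have hlogD : Real.log D = ((n:ℝ)+1) * (Real.log ((n:ℝ)+1) / 2) := by
    rw [hD, hΔ n, Real.log_pow, Real.log_sqrt (by positivity)]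
    push_cast
    ring
  -- from key1: 2^(2^n - 1) ≤ (16 D^5)^M
  set M : ℕ := (n + R n + 1) * (n + R n) with hM
  have hA : (2:ℝ) ^ (2^n - 1 : ℕ) ≤ (16 * D^5) ^ M := by
    have h1 : (2:ℕ)^n - 1 + 1 = 2^n := Nat.sub_add_cancel (Nat.one_le_two_pow)
    have h2 : (2:ℝ)^(2^n : ℕ) = 2^(2^n - 1 : ℕ) * 2 := by
      rw [← pow_succ, h1]
    have h3 : (1:ℝ) ≤ (2:ℝ)^(2^n - 1 : ℕ) := one_le_pow₀ one_le_two
    have := key1 n hn1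
    rw [← hD, ← hM] at this
    linarith
  -- take logs
  have hM0 : (0:ℝ) < 16 * D^5 := by positivity
  have hlogs : ((2^n - 1 : ℕ):ℝ) * Real.log 2 ≤ (M:ℝ) * Real.log (16 * D^5) := by
    have := Real.log_le_log (by positivity) hA
    rwa [Real.log_pow, Real.log_pow] at this
  -- bound log(16 D^5) ≤ 4 * log... 
  have hlog16D : Real.log (16 * D^5) = Real.log 16 + 5 * Real.log D := by
    rw [Real.log_mul (by norm_num) (by positivity), Real.log_pow]
    push_cast; ring
  have hloglog : Real.log ((n:ℝ)+1) ≤ Real.log (2*(n:ℝ)) := by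
    apply Real.log_le_log (by linarith)
    linarith
  have hlogpos : 0 ≤ Real.log ((n:ℝ)+1) := Real.log_nonneg (by linarith)
  have hbound : Real.log (16 * D^5) ≤ 4 * G := by
    rw [hlog16D, hlogD]
    have h16 : Real.log 16 ≤ 15 := by
      have := Real.log_le_sub_one_of_pos (by norm_num : (0:ℝ) < 16)
      linarith
    have hc : 5 * (((n:ℝ)+1) * (Real.log ((n:ℝ)+1) / 2)) ≤ 3 * G := by
      rw [hG]
      have h5 : 5 * (((n:ℝ)+1)/2) ≤ 3 * (n:ℝ) := by linarith
      calc 5 * (((n:ℝ)+1) * (Real.log ((n:ℝ)+1) / 2))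
          = (5 * (((n:ℝ)+1)/2)) * Real.log ((n:ℝ)+1) := by ring
        _ ≤ (3 * (n:ℝ)) * Real.log (2*(n:ℝ)) := by
            apply mul_le_mul h5 hloglog hlogpos (by linarith)
        _ = 3 * ((n:ℝ) * Real.log (2*(n:ℝ))) := by ring
    linarith
  -- lower bound on LHS
  have hlhs : (2:ℝ)^n / 4 ≤ ((2^n - 1 : ℕ):ℝ) * Real.log 2 := by
    have hlog2 : (1/2 : ℝ) ≤ Real.log 2 := by
      have := Real.log_two_gt_d9
      linarith
    have hnn : (2:ℕ)^(n-1) ≤ 2^n - 1 := by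
      have h1 : (2:ℕ)^n = 2 * 2^(n-1) := by
        conv_lhs => rw [← Nat.sub_add_cancel hn1]
        rw [pow_succ]
        ring
      omega
    have hcast : ((2:ℝ))^(n-1) ≤ ((2^n - 1 : ℕ):ℝ) := by
      exact_mod_cast Nat.cast_le.mpr hnn
    have h2 : (2:ℝ)^n = 2 * 2^(n-1) := by
      conv_lhs => rw [← Nat.sub_add_cancel hn1]
      rw [pow_succ]
      ring
    have hp0 : (0:ℝ) < 2^(n-1) := by positivity
    calc (2:ℝ)^n / 4 = 2^(n-1) * (1/2) := by rw [h2]; ring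
    _ ≤ ((2^n - 1 : ℕ):ℝ) * Real.log 2 := by
        apply mul_le_mul hcast hlog2 (by norm_num) (by positivity)
  -- M ≤ q^2
  set q : ℝ := (n:ℝ) + r + 1 with hq
  have hq0 : 0 < q := by rw [hq]; positivity
  have hMq : (M:ℝ) ≤ q^2 := by
    rw [hM, hq, hr]
    push_cast
    nlinarith [(Nat.cast_nonneg (R n) : (0:ℝ) ≤ (R n:ℝ)), (Nat.cast_nonneg n : (0:ℝ) ≤ (n:ℝ))]
  -- combine: 2^n ≤ 16 q^2 G
  have hD1 : (1:ℝ) ≤ D := le_trans (one_le_pow₀ one_le_two) (h2Δ n)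
  have hlogD5 : 0 ≤ Real.log (16 * D^5) := Real.log_nonneg (by nlinarith [one_le_pow₀ hD1 (n := 5)])
  have hmain : (2:ℝ)^n ≤ 16 * q^2 * G := by
    have hMG : (M:ℝ) * Real.log (16*D^5) ≤ q^2 * (4*G) :=
      mul_le_mul hMq hbound hlogD5 (by positivity)
    linarith [hlhs, hlogs, hMG]
  -- T ≤ 4 q s
  have hTq : T ≤ 4 * q * s := by
    have hsq : (4*q*s)^2 = 16 * q^2 * G := by
      rw [← hs2]; ring
    apply le_of_pow_le_pow_left₀ (n := 2) (by norm_num) (by positivity)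
    rw [hT2, hsq]
    exact hmain
  -- 8 s (n+1) ≤ T
  have hsmall : 8 * s * ((n:ℝ)+1) ≤ T := by
    apply le_of_pow_le_pow_left₀ (n := 2) (by norm_num) hT0.le
    rw [hT2]
    have hGle : G ≤ 2 * (n:ℝ)^2 := by
      rw [hG]
      have h1 : Real.log (2*(n:ℝ)) ≤ 2*(n:ℝ) :=
        le_trans (Real.log_le_sub_one_of_pos (by linarith)) (by linarith)
      calc (n:ℝ) * Real.log (2*(n:ℝ)) ≤ (n:ℝ) * (2*(n:ℝ)) :=
            mul_le_mul_of_nonneg_left h1 (by linarith)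
      _ = 2*(n:ℝ)^2 := by ring
    have hnat : (576:ℝ) * ((n:ℝ)+1)^4 ≤ (2:ℝ)^n := by
      have := stmt13_natlem n hn
      have : ((576 * (n+1)^4 : ℕ):ℝ) ≤ ((2^n : ℕ):ℝ) := Nat.cast_le.mpr this
      push_cast at this
      linarith
    calc (8 * s * ((n:ℝ)+1))^2 = 64 * G * ((n:ℝ)+1)^2 := by rw [← hs2]; ring
    _ ≤ 64 * (2*(n:ℝ)^2) * ((n:ℝ)+1)^2 := by
        apply mul_le_mul_of_nonneg_right _ (by positivity)
        linarith [mul_le_mul_of_nonneg_right hGle (show (0:ℝ) ≤ 64 by norm_num)]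
    _ ≤ 576 * ((n:ℝ)+1)^4 := by nlinarith [sq_nonneg ((n:ℝ)+1), sq_nonneg (n:ℝ)]
    _ ≤ (2:ℝ)^n := hnat
  -- conclude
  rw [div_le_iff₀ hs0]
  have : T ≤ 8 * s * r := by
    have h4 : 4 * q * s = 4 * s * r + 4 * s * ((n:ℝ)+1) := by rw [hq]; ring
    nlinarith [hTq, hsmall, hs0.le]
  calc 1/8 * T ≤ s * r := by linarith
  _ = r * s := by ring
end

section
/- The parity set PARITY_n = {x ∈ {0,1}^n : Σᵢ xᵢ is odd} satisfies: conv(PARITY_n) = {x ∈ [0,1]^n : for every S ⊆ [n] with |S| even, Σ_{i∈S}(1-xᵢ) + Σ_{i∉S} xᵢ ≥ 1}. -/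
/-!
For `x ∈ [0,1]^ι` the left-hand side of the inequality indexed by `S` is the `ℓ¹`-distance from
`x` to the even vertex `𝟙_S`. An odd vertex `𝟙_T` lies at distance `#(S ∆ T) ≥ 1` from it.
Conversely, if `x` is separated from the odd vertices by weights `a`, let `P = {i | 0 < a i}`;
then `∑_{i ∈ P} a i - ⟪a, x⟫` is a sum of the distances `|x i - 𝟙_P i|` weighted by `|a i|`. If
`#P` is odd, `𝟙_P` is an odd vertex beating `x`. If `#P` is even, the distance from `x` to `𝟙_P`
is at least `1`, so toggling the coordinate `j` of least weight `|a j|` gives an odd vertex that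
loses only `|a j|` and still beats `x`.
-/

open Finset

def oddVertices (ι : Type*) : Set (ι → ℝ) :=
  {x | (∀ i, x i = 0 ∨ x i = 1) ∧ Odd {i | x i = 1}.ncard}

variable {ι : Type*} [Fintype ι]

theorem oddVertices_eq_image :
    oddVertices ι = (fun s : Finset ι => (s : Set ι).indicator 1) '' {s | Odd s.card} := by
  ext x
  constructor
  · rintro ⟨hx01, hodd⟩
    classical
    refine ⟨({i | x i = 1} : Finset ι), ?_, funext fun i => ?_⟩
    · simpa [← Set.ncard_coe_finset] using hodd
    · rcases hx01 i with h | h <;> simp [h]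
  · rintro ⟨s, hs, rfl⟩
    refine ⟨fun i => ?_, ?_⟩
    · by_cases hi : i ∈ s <;> simp [hi]
    · have hones : {i | (s : Set ι).indicator (1 : ι → ℝ) i = 1} = s := by
        ext i
        by_cases hi : i ∈ s <;> simp [hi]
      rwa [hones, Set.ncard_coe_finset]

theorem finite_oddVertices : (oddVertices ι).Finite := by
  rw [oddVertices_eq_image]
  exact Set.toFinite _ |>.image _

variable [DecidableEq ι]

variable (ι) in
def parityPolytope : Set (ι → ℝ) :=
  {x | (∀ i, 0 ≤ x i ∧ x i ≤ 1) ∧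
    ∀ S : Finset ι, Even S.card → 1 ≤ ∑ i ∈ S, (1 - x i) + ∑ i ∈ Sᶜ, x i}

theorem sum_one_sub_add_sum_compl (S : Finset ι) (x : ι → ℝ) :
    ∑ i ∈ S, (1 - x i) + ∑ i ∈ Sᶜ, x i = ∑ i, if i ∈ S then 1 - x i else x i := by
  rw [sum_ite]
  congr 2 <;> ext <;> simp

theorem indicator_mem_parityPolytope {T : Finset ι} (hT : Odd T.card) :
    (T : Set ι).indicator 1 ∈ parityPolytope ι := by
  refine ⟨fun i => by by_cases hi : i ∈ T <;> simp [hi], fun S hS => ?_⟩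
  have hST : (symmDiff S T).Nonempty := by
    rw [nonempty_iff_ne_empty, Ne, ← bot_eq_empty, symmDiff_eq_bot]
    rintro rfl
    exact Nat.not_even_iff_odd.mpr hT hS
  calc (1 : ℝ) ≤ #(symmDiff S T) := mod_cast hST.card_pos
    _ = ∑ i, if i ∈ symmDiff S T then (1 : ℝ) else 0 := by simp
    _ = _ := by
      rw [sum_one_sub_add_sum_compl]
      refine sum_congr rfl fun i _ => ?_
      by_cases hiS : i ∈ S <;> by_cases hiT : i ∈ T <;> simp [hiS, hiT, mem_symmDiff]

theorem oddVertices_subset_parityPolytope : oddVertices ι ⊆ parityPolytope ι := by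
  rw [oddVertices_eq_image]
  rintro _ ⟨T, hT, rfl⟩
  exact indicator_mem_parityPolytope hT

theorem convex_parityPolytope : Convex ℝ (parityPolytope ι) := by
  rintro x ⟨hx01, hx⟩ y ⟨hy01, hy⟩ a b ha hb hab
  obtain rfl : b = 1 - a := by linarith
  refine ⟨fun i => ?_, fun S hS => ?_⟩
  · simp only [Pi.add_apply, Pi.smul_apply, smul_eq_mul]
    constructor <;> nlinarith [hx01 i, hy01 i]
  · have hcomb : ∑ i ∈ S, (1 - (a • x + (1 - a) • y) i) + ∑ i ∈ Sᶜ, (a • x + (1 - a) • y) i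
        = a * (∑ i ∈ S, (1 - x i) + ∑ i ∈ Sᶜ, x i)
          + (1 - a) * (∑ i ∈ S, (1 - y i) + ∑ i ∈ Sᶜ, y i) := by
      simp only [Pi.add_apply, Pi.smul_apply, smul_eq_mul, sum_sub_distrib, sum_add_distrib,
        ← mul_sum, sum_const, nsmul_eq_mul]
      ring
    rw [hcomb]
    nlinarith [hx S hS, hy S hS]

theorem sum_filter_pos_sub_sum_mul (a x : ι → ℝ) :
    ∑ i ∈ {i | 0 < a i}, a i - ∑ i, a i * x i
      = ∑ i, |a i| * (if i ∈ ({i | 0 < a i} : Finset ι) then 1 - x i else x i) := by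
  rw [sum_filter, ← sum_sub_distrib]
  refine sum_congr rfl fun i _ => ?_
  by_cases ha : 0 < a i
  · simp only [ha, ↓reduceIte, abs_of_pos ha, mem_filter, mem_univ, and_self]
    ring
  · simp [ha, abs_of_nonpos (not_lt.mp ha)]

theorem exists_odd_card_sum_eq_sum_filter_pos_sub (a : ι → ℝ)
    (hP : Even (#{i | 0 < a i} : ℕ)) (j : ι) :
    ∃ s : Finset ι, Odd #s ∧ ∑ i ∈ s, a i = ∑ i ∈ {i | 0 < a i}, a i - |a j| := by
  by_cases hj : 0 < a j
  · have hjP : j ∈ ({i | 0 < a i} : Finset ι) := by simpa using hj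
    refine ⟨_, ?_, by rw [abs_of_pos hj, sum_erase_eq_sub hjP]⟩
    rw [card_erase_of_mem hjP]
    exact Nat.Even.sub_odd (card_pos.mpr ⟨j, hjP⟩) hP odd_one
  · have hjP : j ∉ ({i | 0 < a i} : Finset ι) := by simpa using hj
    refine ⟨_, ?_, by rw [abs_of_nonpos (not_lt.mp hj), sum_insert hjP]; ring⟩
    rw [card_insert_of_notMem hjP]
    exact hP.add_one

theorem exists_odd_card_sum_mul_le (a : ι → ℝ) {x : ι → ℝ} (hx : x ∈ parityPolytope ι) :
    ∃ s : Finset ι, Odd #s ∧ ∑ i, a i * x i ≤ ∑ i ∈ s, a i := by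
  set P : Finset ι := {i | 0 < a i}
  have hgap := sum_filter_pos_sub_sum_mul a x
  have hterm_nonneg : ∀ i, 0 ≤ if i ∈ P then 1 - x i else x i := fun i => by
    split_ifs <;> linarith [hx.1 i]
  rcases Nat.even_or_odd #P with hP | hP
  · have hdist := hx.2 P hP
    rw [sum_one_sub_add_sum_compl] at hdist
    have : Nonempty ι := by
      -- over an empty index set `hdist` reads `1 ≤ 0`
      by_contra h
      rw [not_nonempty_iff] at h
      norm_num at hdist
    obtain ⟨j, hj⟩ := Finite.exists_min fun i => |a i|
    obtain ⟨s, hs, hsum⟩ := exists_odd_card_sum_eq_sum_filter_pos_sub a hP j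
    refine ⟨s, hs, ?_⟩
    have hloss : |a j| ≤ ∑ i ∈ P, a i - ∑ i, a i * x i := calc
      |a j| ≤ |a j| * ∑ i, (if i ∈ P then 1 - x i else x i) :=
        le_mul_of_one_le_right (abs_nonneg _) hdist
      _ = ∑ i, |a j| * (if i ∈ P then 1 - x i else x i) := mul_sum _ _ _
      _ ≤ ∑ i, |a i| * (if i ∈ P then 1 - x i else x i) :=
        sum_le_sum fun i _ => mul_le_mul_of_nonneg_right (hj i) (hterm_nonneg i)
      _ = _ := hgap.symm
    linarith
  · refine ⟨P, hP, ?_⟩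
    have hgap_nonneg :=
      sum_nonneg fun i (_ : i ∈ univ) => mul_nonneg (abs_nonneg (a i)) (hterm_nonneg i)
    linarith

theorem parityPolytope_subset_convexHull : parityPolytope ι ⊆ convexHull ℝ (oddVertices ι) := by
  intro x hx
  by_contra hx'
  obtain ⟨f, u, hfV, hux⟩ := geometric_hahn_banach_closed_point (convex_convexHull ℝ _)
    (finite_oddVertices.isClosed_convexHull (𝕜 := ℝ)) hx'
  set a : ι → ℝ := fun i => f fun j => if i = j then 1 else 0
  have hf : ∀ y, f y = ∑ i, a i * y i := fun y => by
    simpa [mul_comm] using f.toLinearMap.pi_apply_eq_sum_univ y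
  obtain ⟨s, hs, hfs⟩ := exists_odd_card_sum_mul_le a hx
  have hvs : (s : Set ι).indicator 1 ∈ oddVertices ι := by
    rw [oddVertices_eq_image]; exact ⟨s, hs, rfl⟩
  have hfv := hfV _ (subset_convexHull ℝ _ hvs)
  rw [hf] at hfv hux
  simp only [Set.indicator_apply, SetLike.mem_coe, Pi.one_apply, mul_ite, mul_one, mul_zero,
    sum_ite_mem, univ_inter] at hfv
  linarith

theorem convexHull_oddVertices : convexHull ℝ (oddVertices ι) = parityPolytope ι :=
  (convexHull_min oddVertices_subset_parityPolytope convex_parityPolytope).antisymm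
    parityPolytope_subset_convexHull

theorem stmt19_general {n : ℕ} :
    convexHull ℝ {x : Fin n → ℝ | (∀ i, x i = 0 ∨ x i = 1) ∧ Odd ({i | x i = 1}.ncard)} =
      {x : Fin n → ℝ | (∀ i, 0 ≤ x i ∧ x i ≤ 1) ∧
        ∀ S : Finset (Fin n), Even S.card →
          1 ≤ ∑ i ∈ S, (1 - x i) + ∑ i ∈ Sᶜ, x i} :=
  convexHull_oddVertices

/-- The parity polytope: the convex hull of the odd-weight 0/1 vectors equals the set of
x ∈ [0,1]^n satisfying, for every even-size S ⊆ [n], Σ_{i∈S}(1-x_i) + Σ_{i∉S} x_i ≥ 1. -/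
theorem stmt19 {n : ℕ} (hn : 1 ≤ n) :
    convexHull ℝ {x : Fin n → ℝ | (∀ i, x i = 0 ∨ x i = 1) ∧ Odd ({i | x i = 1}.ncard)} =
      {x : Fin n → ℝ | (∀ i, 0 ≤ x i ∧ x i ≤ 1) ∧
        ∀ S : Finset (Fin n), Even S.card →
          1 ≤ ∑ i ∈ S, (1 - x i) + ∑ i ∈ Sᶜ, x i} :=
  stmt19_general
end
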